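/- arXiv:2110.15329 — 2 statements merged into one kernel-verified Lean document; each statement's English description precedes it below -/
import Mathlib

section
/- Let S be a chain with n elements, so its Cartan matrix C is the n×n lower triangular matrix of all 1's on and below the diagonal. Then det(x·C + Cᵀ) = xⁿ + x^{n−1} + ⋯ + x + 1. -/
/-!
Write `A n = x • C + Cᵀ`, with entries `x + 1` on the diagonal, `x` below and `1` above it.
The first row of `A (n + 1)` is `x • e₀ + 𝟙`, so by linearity in that row
`det A (n + 1) = x * det A n + det A'`, where `A'` has first row `𝟙`. Subtracting `x` times
this row from every other row of `A'` leaves an upper unitriangular matrix, so `det A' = 1`.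
The recursion `Dₙ₊₁ = x Dₙ + 1` with `D₀ = 1` is solved by `1 + x + ⋯ + xⁿ`.
-/

open Polynomial

namespace Matrix

variable {R : Type*} [CommRing R]

/-- `x • C + Cᵀ` for the Cartan matrix `C` of the `n`-element chain. -/
def chainPencil (x : R) (n : ℕ) : Matrix (Fin n) (Fin n) R :=
  of fun i j => (if j ≤ i then x else 0) + (if i ≤ j then 1 else 0)

theorem chainPencil_submatrix_succ (x : R) (n : ℕ) :
    (chainPencil x (n + 1)).submatrix Fin.succ Fin.succ = chainPencil x n := by
  ext i j
  simp [chainPencil]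

theorem det_updateRow_single_zero {n : ℕ} (A : Matrix (Fin (n + 1)) (Fin (n + 1)) R) :
    (A.updateRow 0 (Pi.single 0 1)).det = (A.submatrix Fin.succ Fin.succ).det := by
  rw [det_succ_row_zero, Fin.sum_univ_succ]
  simp only [Fin.val_zero, pow_zero, updateRow_self, Pi.single_eq_same, mul_one, one_mul,
    Pi.single_eq_of_ne (Fin.succ_ne_zero _), mul_zero, zero_mul, Finset.sum_const_zero, add_zero]
  rw [← Fin.succAbove_zero, submatrix_updateRow_succAbove]

theorem det_chainPencil_updateRow_zero_one (x : R) (n : ℕ) :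
    ((chainPencil x (n + 1)).updateRow 0 1).det = 1 := by
  let U : Matrix (Fin (n + 1)) (Fin (n + 1)) R :=
    of fun i j => if j < i then 0 else if i = 0 ∨ i = j then 1 else 1 - x
  have hU : U.det = 1 := by
    rw [det_of_isUpperTriangular]
    · simp [U]
    · intro i j hji
      simp [U, show j < i from hji]
  rw [← hU]
  refine det_eq_of_forall_row_eq_smul_add_const (fun i => if i = 0 then 0 else x) 0 (by simp)
    fun i j => ?_
  rcases eq_or_ne i 0 with rfl | hi
  · simp [U]
  · simp only [updateRow_ne hi, chainPencil, U, of_apply, hi, if_false]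
    simp only [Fin.not_lt_zero, if_false, true_or, if_true, mul_one]
    rcases lt_trichotomy j i with h | rfl | h
    · simp [h, h.le, h.not_ge]
    · simp [add_comm]
    · simp [h.not_gt, h.not_ge, h.le, h.ne]

theorem det_chainPencil_succ (x : R) (n : ℕ) :
    (chainPencil x (n + 1)).det = x * (chainPencil x n).det + 1 := by
  have hrow : chainPencil x (n + 1) 0 = x • Pi.single 0 1 + 1 := by
    ext j
    rcases Fin.eq_zero_or_eq_succ j with rfl | ⟨j, rfl⟩ <;> simp [chainPencil]
  conv_lhs => rw [← updateRow_eq_self (chainPencil x (n + 1)) 0, hrow]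
  rw [det_updateRow_add, det_updateRow_smul, det_updateRow_single_zero,
    chainPencil_submatrix_succ, det_chainPencil_updateRow_zero_one]

theorem det_chainPencil (x : R) (n : ℕ) :
    (chainPencil x n).det = ∑ i ∈ Finset.range (n + 1), x ^ i := by
  induction n with
  | zero => simp
  | succ n ih => rw [det_chainPencil_succ, ih, ← geom_sum_succ]

end Matrix

theorem stmt_8 (n : ℕ) (M : Matrix (Fin n) (Fin n) ℤ)
    (hM : ∀ i j : Fin n, M i j = if j ≤ i then 1 else 0) :
    (Matrix.of fun i j => X * C (M i j) + C (M j i)).det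
      = ∑ i ∈ Finset.range (n + 1), X ^ i := by
  have hA : (Matrix.of fun i j => X * C (M i j) + C (M j i)) = Matrix.chainPencil X n := by
    ext i j
    simp [Matrix.chainPencil, hM, apply_ite C]
  rw [hA, Matrix.det_chainPencil]
end

section
/- Let X be a finite poset with distinct elements v, v' and let S, S' be finite posets. Then the iterated insertions (X ←_v S) ←_{v'} S' and (X ←_{v'} S') ←_v S are isomorphic as posets. -/
/-!
Both iterated insertions live on `(X ∖ {v, v'}) ⊔ S ⊔ S'`, matched piece by piece. On either side,
two elements of the same piece are compared by that piece's order, and elements of different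
pieces are compared in `X` through the points `x`, `v` or `v'` they stand for.
-/

/-- The order relation of the insertion `X ←_v S` of a poset `S` into `X`
at the element `v`, defined on the carrier `{x : X // x ≠ v} ⊕ S`. -/
def insRel {X S : Type*} (rX : X → X → Prop) (rS : S → S → Prop) (v : X) :
    ({x : X // x ≠ v} ⊕ S) → ({x : X // x ≠ v} ⊕ S) → Prop
  | Sum.inl x, Sum.inl y => rX x.val y.val
  | Sum.inl x, Sum.inr _ => rX x.val v
  | Sum.inr _, Sum.inl y => rX v y.val
  | Sum.inr a, Sum.inr b => rS a b

section

variable {X S S' : Type*}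

/-- The identity of `(X ∖ {v, v'}) ⊔ S ⊔ S'`, read from the carrier of `(X ←_v S) ←_{v'} S'` to
that of `(X ←_{v'} S') ←_v S`. -/
def insSwap (v v' : X) (h : v ≠ v') :
    {y : {x : X // x ≠ v} ⊕ S // y ≠ .inl ⟨v', h.symm⟩} ⊕ S' →
      {y : {x : X // x ≠ v'} ⊕ S' // y ≠ .inl ⟨v, h⟩} ⊕ S
  | .inl ⟨.inl x, hx⟩ =>
      .inl ⟨.inl ⟨x, fun e => hx (by simp [← e])⟩, fun e => x.2 (by simpa using e)⟩
  | .inl ⟨.inr s, _⟩ => .inr s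
  | .inr s' => .inl ⟨.inr s', Sum.inr_ne_inl⟩

theorem insSwap_insSwap (v v' : X) (h : v ≠ v')
    (a : {y : {x : X // x ≠ v} ⊕ S // y ≠ .inl ⟨v', h.symm⟩} ⊕ S') :
    insSwap v' v h.symm (insSwap v v' h a) = a := by
  rcases a with ⟨⟨x, hx⟩ | s, ha⟩ | s' <;> rfl

def insSwapEquiv (v v' : X) (h : v ≠ v') :
    {y : {x : X // x ≠ v} ⊕ S // y ≠ .inl ⟨v', h.symm⟩} ⊕ S' ≃
      {y : {x : X // x ≠ v'} ⊕ S' // y ≠ .inl ⟨v, h⟩} ⊕ S where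
  toFun := insSwap v v' h
  invFun := insSwap v' v h.symm
  left_inv := insSwap_insSwap v v' h
  right_inv := insSwap_insSwap v' v h.symm

def insRelCommIso (rX : X → X → Prop) (rS : S → S → Prop) (rS' : S' → S' → Prop) (v v' : X)
    (h : v ≠ v') :
    insRel (insRel rX rS v) rS' (.inl ⟨v', h.symm⟩) ≃r
      insRel (insRel rX rS' v') rS (.inl ⟨v, h⟩) where
  toEquiv := insSwapEquiv v v' h
  map_rel_iff' {a b} := by
    rcases a with ⟨⟨x, hx⟩ | s, ha⟩ | s' <;> rcases b with ⟨⟨y, hy⟩ | t, hb⟩ | t' <;> rfl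

end

theorem stmt_19_general (X S S' : Type*)
    [PartialOrder X] [PartialOrder S] [PartialOrder S']
    (v v' : X) (hvv' : v ≠ v') :
    -- first insert S at v, then S' at v' (viewed inside `X ←_v S`)
    let r1 := insRel ((· ≤ ·) : X → X → Prop) ((· ≤ ·) : S → S → Prop) v
    let w' : {x : X // x ≠ v} ⊕ S := Sum.inl ⟨v', fun h => hvv' h.symm⟩
    let rA := insRel r1 ((· ≤ ·) : S' → S' → Prop) w'
    -- first insert S' at v', then S at v (viewed inside `X ←_{v'} S'`)
    let r2 := insRel ((· ≤ ·) : X → X → Prop) ((· ≤ ·) : S' → S' → Prop) v'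
    let w : {x : X // x ≠ v'} ⊕ S' := Sum.inl ⟨v, hvv'⟩
    let rB := insRel r2 ((· ≤ ·) : S → S → Prop) w
    ∃ e : ({y : {x : X // x ≠ v} ⊕ S // y ≠ w'} ⊕ S') ≃
          ({y : {x : X // x ≠ v'} ⊕ S' // y ≠ w} ⊕ S),
      ∀ a b, rA a b ↔ rB (e a) (e b) := by
  let e := insRelCommIso ((· ≤ ·) : X → X → Prop) ((· ≤ ·) : S → S → Prop)
    ((· ≤ ·) : S' → S' → Prop) v v' hvv'
  exact ⟨e.toEquiv, fun _ _ => e.map_rel_iff.symm⟩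

theorem stmt_19 (X S S' : Type*) [Fintype X] [Fintype S] [Fintype S']
    [PartialOrder X] [PartialOrder S] [PartialOrder S']
    (v v' : X) (hvv' : v ≠ v') :
    -- first insert S at v, then S' at v' (viewed inside `X ←_v S`)
    let r1 := insRel ((· ≤ ·) : X → X → Prop) ((· ≤ ·) : S → S → Prop) v
    let w' : {x : X // x ≠ v} ⊕ S := Sum.inl ⟨v', fun h => hvv' h.symm⟩
    let rA := insRel r1 ((· ≤ ·) : S' → S' → Prop) w'
    -- first insert S' at v', then S at v (viewed inside `X ←_{v'} S'`)
    let r2 := insRel ((· ≤ ·) : X → X → Prop) ((· ≤ ·) : S' → S' → Prop) v'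
    let w : {x : X // x ≠ v'} ⊕ S' := Sum.inl ⟨v, hvv'⟩
    let rB := insRel r2 ((· ≤ ·) : S → S → Prop) w
    ∃ e : ({y : {x : X // x ≠ v} ⊕ S // y ≠ w'} ⊕ S') ≃
          ({y : {x : X // x ≠ v'} ⊕ S' // y ≠ w} ⊕ S),
      ∀ a b, rA a b ↔ rB (e a) (e b) :=
  stmt_19_general X S S' v v' hvv'
end
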